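/- arXiv:1409.2325 — 2 statements merged into one kernel-verified Lean document; each statement's English description precedes it below -/
import Mathlib

section
/- The set of lines {v ∈ L : B(v,v) = −1, B(v,K) = −1, B(v,C) = 0} is exactly the set {l₁, …, lₙ} ∪ {f − l₁, …, f − lₙ}; in particular it has exactly 2n elements. -/
noncomputable section
namespace ADEPaper

/-- The Picard lattice `L = ℤ^{n+2}` with basis `f = e 0`, `s = e 1`, `lᵢ = e_{i+1}` for
`1 ≤ i ≤ n`. -/
abbrev L (n : ℕ) : Type := Fin (n + 2) → ℤ

/-- The intersection form: `B(f,f) = B(s,s) = 0`, `B(f,s) = 1`, `B(lᵢ,lᵢ) = -1`, all other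
pairs of distinct basis vectors orthogonal. -/
def B (n : ℕ) (v w : L n) : ℤ :=
  v 0 * w 1 + v 1 * w 0 - ∑ i : Fin n, v i.succ.succ * w i.succ.succ

/-- The class `f` of a fiber of the ruling. -/
def f (n : ℕ) : L n := fun j => if (j : ℕ) = 0 then 1 else 0

/-- The exceptional class `l i` here denotes `l_{i+1}` of the paper, `i : Fin n`. -/
def l (n : ℕ) (i : Fin n) : L n := fun j => if (j : ℕ) = (i : ℕ) + 2 then 1 else 0

/-- The canonical class `K = -2f - 2s + l₁ + ⋯ + lₙ`. -/
def K (n : ℕ) : L n := fun j => if (j : ℕ) ≤ 1 then -2 else 1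

/-- `C = f`, a fiber of the ruling of the `Dₙ`-surface. -/
def C (n : ℕ) : L n := f n

/-!
Write `v = a f + b s + ∑ cᵢ lᵢ`. Then `v·C = b`, so for a line `v² = 2ab - ∑ cᵢ² = -∑ cᵢ² = -1`
and exactly one `cᵢ` is nonzero, equal to `±1`. Finally `v·K = -2a - ∑ cᵢ = -1` forces `a = 0`
when `cᵢ = 1` and `a = 1` when `cᵢ = -1`, i.e. `v = lᵢ` or `v = f - lᵢ`.
-/

theorem Int.exists_eq_pi_single_of_sum_mul_self_eq_one {ι : Type*} [Fintype ι] [DecidableEq ι]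
    {w : ι → ℤ} (h : ∑ i, w i * w i = 1) :
    ∃ i, w = Pi.single i 1 ∨ w = Pi.single i (-1) := by
  obtain ⟨i, hi⟩ : ∃ i, w i ≠ 0 := by
    by_contra! hw
    simp [hw] at h
  have hsplit : w i * w i + ∑ j ∈ Finset.univ.erase i, w j * w j = 1 :=
    (Finset.add_sum_erase _ (fun j => w j * w j) (Finset.mem_univ i)).trans h
  have hrest_nonneg : 0 ≤ ∑ j ∈ Finset.univ.erase i, w j * w j :=
    Finset.sum_nonneg fun j _ => mul_self_nonneg (w j)
  have hi_pos := mul_self_pos.mpr hi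
  have hi_one : w i * w i = 1 := by linarith
  have hrest : ∀ j ≠ i, w j = 0 := by
    intro j hj
    have hzero : ∑ j ∈ Finset.univ.erase i, w j * w j = 0 := by linarith
    exact mul_self_eq_zero.mp <| (Finset.sum_eq_zero_iff_of_nonneg
      fun k _ => mul_self_nonneg (w k)).mp hzero j (Finset.mem_erase.mpr ⟨hj, Finset.mem_univ j⟩)
  have hw : w = Pi.single i (w i) := by
    ext j
    by_cases hj : j = i
    · subst hj; simp
    · simp [hj, hrest j hj]
  rcases mul_self_eq_one_iff.mp hi_one with h1 | h1
  · exact ⟨i, .inl (h1 ▸ hw)⟩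
  · exact ⟨i, .inr (h1 ▸ hw)⟩

variable {n : ℕ}

theorem L_ext {v w : L n} (h0 : v 0 = w 0) (h1 : v 1 = w 1)
    (h : ∀ i : Fin n, v i.succ.succ = w i.succ.succ) : v = w := by
  funext j
  refine Fin.cases h0 (Fin.cases ?_ h) j
  simpa using h1

@[simp] theorem f_apply_zero : f n 0 = 1 := rfl
@[simp] theorem f_apply_one : f n 1 = 0 := by simp [f]
@[simp] theorem f_apply_succ_succ (i : Fin n) : f n i.succ.succ = 0 := by simp [f]
@[simp] theorem l_apply_zero (i : Fin n) : l n i 0 = 0 := by simp [l]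
@[simp] theorem l_apply_one (i : Fin n) : l n i 1 = 0 := by simp [l]
@[simp] theorem l_apply_succ_succ (i j : Fin n) :
    l n i j.succ.succ = (Pi.single i 1 : Fin n → ℤ) j := by
  simp [l, Pi.single_apply, Fin.val_inj]

theorem B_C (v : L n) : B n v (C n) = v 1 := by
  simp [B, C]

theorem B_K (v : L n) : B n v (K n) = -2 * v 0 - 2 * v 1 - ∑ i : Fin n, v i.succ.succ := by
  have hK0 : K n 0 = -2 := rfl
  have hK1 : K n 1 = -2 := by simp [K]
  have hK : ∀ i : Fin n, K n i.succ.succ = 1 := fun i => by simp [K]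
  simp only [B, hK0, hK1, hK, mul_one]
  ring

theorem B_self_of_apply_one_eq_zero {v : L n} (h : v 1 = 0) :
    B n v v = -∑ i : Fin n, v i.succ.succ * v i.succ.succ := by
  simp [B, h]

def IsLine (v : L n) : Prop := B n v v = -1 ∧ B n v (K n) = -1 ∧ B n v (C n) = 0

theorem isLine_l (i : Fin n) : IsLine (l n i) := by
  refine ⟨?_, ?_, ?_⟩
  · simp [B, Pi.single_apply]
  · simp [B_K]
  · simp [B_C]

theorem isLine_f_sub_l (i : Fin n) : IsLine (f n - l n i) := by
  refine ⟨?_, ?_, ?_⟩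
  · simp [B, Pi.single_apply]
  · simp [B_K]
  · simp [B_C]

theorem IsLine.exists_eq {v : L n} (hv : IsLine v) :
    (∃ i, l n i = v) ∨ (∃ i, f n - l n i = v) := by
  obtain ⟨hvv, hvK, hvC⟩ := hv
  rw [B_C] at hvC
  rw [B_K, hvC] at hvK
  rw [B_self_of_apply_one_eq_zero hvC, neg_eq_iff_eq_neg, neg_neg] at hvv
  obtain ⟨i, hw | hw⟩ := Int.exists_eq_pi_single_of_sum_mul_self_eq_one hvv
  · have hcoord := congrFun hw
    have hsum : ∑ j : Fin n, v j.succ.succ = 1 := by simp [hcoord]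
    exact .inl ⟨i, L_ext (by simp; linarith) (by simp [hvC]) (by simp [hcoord])⟩
  · have hcoord := congrFun hw
    have hsum : ∑ j : Fin n, v j.succ.succ = -1 := by simp [hcoord]
    exact .inr ⟨i, L_ext (by simp; linarith) (by simp [hvC]) (by simp [hcoord, Pi.single_neg])⟩

theorem isLine_iff (v : L n) : IsLine v ↔ (∃ i, l n i = v) ∨ (∃ i, f n - l n i = v) := by
  refine ⟨IsLine.exists_eq, ?_⟩
  rintro (⟨i, rfl⟩ | ⟨i, rfl⟩)
  exacts [isLine_l i, isLine_f_sub_l i]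

theorem l_injective : Function.Injective (l n) := fun i j h => by
  simpa [Pi.single_apply, eq_comm] using congrFun h j.succ.succ

theorem f_sub_l_injective : Function.Injective fun i => f n - l n i := fun i j h => by
  simpa [Pi.single_apply, eq_comm] using congrFun h j.succ.succ

theorem disjoint_range_l_range_f_sub_l :
    Disjoint (Set.range (l n)) (Set.range fun i => f n - l n i) := by
  rw [Set.disjoint_left]
  rintro _ ⟨i, rfl⟩ ⟨j, hj⟩
  simpa using congrFun hj 0

theorem Dn_lines_general (n : ℕ) :
    {v : L n | B n v v = -1 ∧ B n v (K n) = -1 ∧ B n v (C n) = 0}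
      = (Set.range fun i : Fin n => l n i) ∪ (Set.range fun i : Fin n => f n - l n i) ∧
    {v : L n | B n v v = -1 ∧ B n v (K n) = -1 ∧ B n v (C n) = 0}.ncard = 2 * n := by
  change {v | IsLine v} = _ ∧ {v | IsLine v}.ncard = _
  have hlines : {v : L n | IsLine v}
      = (Set.range fun i : Fin n => l n i) ∪ (Set.range fun i : Fin n => f n - l n i) :=
    Set.ext isLine_iff
  refine ⟨hlines, ?_⟩
  rw [hlines, Set.ncard_union_eq disjoint_range_l_range_f_sub_l,
    Set.ncard_range_of_injective l_injective, Set.ncard_range_of_injective f_sub_l_injective,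
    Nat.card_eq_fintype_card, Fintype.card_fin, two_mul]

/-- The set of lines on a `Dₙ`-surface (`n ≥ 3`) is exactly
`{l₁, …, lₙ} ∪ {f - l₁, …, f - lₙ}`; in particular it has exactly `2n` elements. -/
theorem Dn_lines (n : ℕ) (hn : 3 ≤ n) :
    {v : L n | B n v v = -1 ∧ B n v (K n) = -1 ∧ B n v (C n) = 0}
      = (Set.range fun i : Fin n => l n i) ∪ (Set.range fun i : Fin n => f n - l n i) ∧
    {v : L n | B n v v = -1 ∧ B n v (K n) = -1 ∧ B n v (C n) = 0}.ncard = 2 * n :=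
  Dn_lines_general n

end ADEPaper
end
end

section
/- The set of rulings {v ∈ L : B(v,v) = 0, B(v,K) = −2, B(v,C) = 0} consists of the single element f, i.e., it equals {f}. -/
noncomputable section
namespace ADEPaper

/-- The set of rulings on a `Dₙ`-surface (`n ≥ 3`) consists of the single element `f`. -/
theorem Dn_rulings (n : ℕ) (hn : 3 ≤ n) :
    {v : L n | B n v v = 0 ∧ B n v (K n) = -2 ∧ B n v (C n) = 0} = {f n} := by

  have hK0 : K n 0 = -2 := by simp [K]
  have hK1 : K n 1 = -2 := by simp [K]
  have hKss : ∀ i : Fin n, K n i.succ.succ = 1 := by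
    intro i; simp [K, Fin.val_succ]
  have hf0 : f n 0 = 1 := by simp [f]
  have hf1 : f n 1 = 0 := by simp [f]
  have hfss : ∀ i : Fin n, f n i.succ.succ = 0 := by
    intro i; simp [f, Fin.val_succ]
  ext v
  simp only [Set.mem_setOf_eq, Set.mem_singleton_iff]
  constructor
  · rintro ⟨h1, h2, h3⟩
    have hv1 : v 1 = 0 := by
      simpa [B, C, hf0, hf1, hfss] using h3
    have hsum2 : ∑ i : Fin n, v i.succ.succ * v i.succ.succ = 0 := by
      simp only [B, hv1, mul_zero, zero_mul, add_zero, zero_add] at h1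
      linarith
    have hzero : ∀ i : Fin n, v i.succ.succ = 0 := by
      intro i
      have h := (Finset.sum_eq_zero_iff_of_nonneg
        (fun j _ => mul_self_nonneg (v j.succ.succ))).mp hsum2 i (Finset.mem_univ i)
      exact mul_self_eq_zero.mp h
    have hv0 : v 0 = 1 := by
      simp only [B, hK0, hK1, hv1] at h2
      rw [Finset.sum_congr rfl (fun i _ => by rw [hzero i, zero_mul])] at h2
      simp at h2
      linarith
    funext j
    induction j using Fin.cases with
    | zero => rw [hv0, hf0]
    | succ i =>
      induction i using Fin.cases with
      | zero =>
        have : (Fin.succ 0 : Fin (n+2)) = 1 := by ext; simp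
        rw [this, hv1, hf1]
      | succ k => rw [hzero k, hfss k]
  · rintro rfl
    refine ⟨?_, ?_, ?_⟩ <;> simp [B, C, hf0, hf1, hfss, hK0, hK1, hKss]


end ADEPaper
end
end
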